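/- The prepend operation distributes over intersection and definitive union: for definitive sets X, Y, ▷(X ∩ Y) = ▷X ∩ ▷Y and ▷(X ⩁ Y) = ▷X ⩁ ▷Y. -/

import Mathlib

/-- A trace is a finite list of states or an infinite stream of states. -/
def Trace (σ : Type) := List σ ⊕ (ℕ → σ)

namespace Trace

variable {σ : Type}

/-- Concatenation of traces; if the first is infinite, the result is the first. -/
def app : Trace σ → Trace σ → Trace σ
  | Sum.inl l, Sum.inl l' => Sum.inl (l ++ l')
  | Sum.inl l, Sum.inr s =>
      Sum.inr (fun n => if h : n < l.length then l.get ⟨n, h⟩ else s (n - l.length))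
  | Sum.inr s, _ => Sum.inr s

instance : Append (Trace σ) := ⟨app⟩

/-- The empty trace ε. -/
def eps : Trace σ := Sum.inl []

/-- A trace is infinite iff it is a stream. -/
def Inf (t : Trace σ) : Prop := t.isRight

/-- Drop the first state of a trace. -/
def drop1 : Trace σ → Trace σ
  | Sum.inl [] => Sum.inl []
  | Sum.inl (_ :: l) => Sum.inl l
  | Sum.inr s => Sum.inr (fun n => s (n + 1))

/-- Drop the first `n` states of a trace. -/
def drop (t : Trace σ) (n : ℕ) : Trace σ := drop1^[n] t

/-- The first state of a trace, if any. -/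
def head? : Trace σ → Option σ
  | Sum.inl [] => none
  | Sum.inl (a :: _) => some a
  | Sum.inr s => some (s 0)

/-- The set of prefixes of a trace. -/
def pre (t : Trace σ) : Set (Trace σ) := {u | ∃ v, t = u ++ v}

/-- The set of prefixes of traces in a set: ↓X. -/
def preS (X : Set (Trace σ)) : Set (Trace σ) := ⋃ t ∈ X, pre t

/-- The set of extensions of a trace: ↑t. -/
def ext (t : Trace σ) : Set (Trace σ) := {u | ∃ v, u = t ++ v}

/-- The definitive prefixes of a set of traces: ↯X. -/
def dp (X : Set (Trace σ)) : Set (Trace σ) := {t | ext t ⊆ preS X}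

/-- A set of traces is definitive iff it equals its own set of definitive prefixes. -/
def Definitive (X : Set (Trace σ)) : Prop := X = dp X

/-- Definitive union ⩁ of a collection of trace sets. -/
def dUnionS (S : Set (Set (Trace σ))) : Set (Trace σ) := dp (⋃₀ S)

/-- Binary / indexed definitive union. -/
def dUnion (X Y : Set (Trace σ)) : Set (Trace σ) := dp (X ∪ Y)

def dUnionI {ι : Sort*} (X : ι → Set (Trace σ)) : Set (Trace σ) := dp (⋃ i, X i)

/-- The prepend operation ▷X. -/
def prepend (X : Set (Trace σ)) : Set (Trace σ) := {t | t.drop 1 ∈ X}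

/-- Σ^ω, the set of infinite traces. -/
def omegaSet (σ : Type) : Set (Trace σ) := {t | t.Inf}

/-- The first state of a trace, with the empty state as default. -/
def st0 {A : Type} (t : Trace (Set A)) : Set A := (t.head?).getD ∅

end Trace

/-- Syntax of LTL formulae over atomic propositions `A`. -/
inductive LTL (A : Type) where
  | top : LTL A
  | atom : A → LTL A
  | neg : LTL A → LTL A
  | and : LTL A → LTL A → LTL A
  | next : LTL A → LTL A
  | until_ : LTL A → LTL A → LTL A

namespace LTL

variable {A : Type}

open Trace

/-- Conventional LTL satisfaction on (infinite) traces. -/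
def Sat : Trace (Set A) → LTL A → Prop
  | t, .top => True
  | t, .atom a => a ∈ t.st0
  | t, .neg φ => ¬ Sat t φ
  | t, .and φ ψ => Sat t φ ∧ Sat t ψ
  | t, .next φ => Sat (t.drop 1) φ
  | t, .until_ φ ψ => ∃ i, Sat (t.drop i) ψ ∧ ∀ j < i, Sat (t.drop j) φ

/-- Answer-indexed family semantics of conventional LTL (sets of infinite traces). -/
def sem : LTL A → Bool → Set (Trace (Set A))
  | .top, true => omegaSet (Set A)
  | .top, false => ∅
  | .atom a, true => {t | t.Inf ∧ a ∈ t.st0}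
  | .atom a, false => {t | t.Inf ∧ a ∉ t.st0}
  | .neg φ, b => sem φ (!b)
  | .and φ ψ, true => sem φ true ∩ sem ψ true
  | .and φ ψ, false => sem φ false ∪ sem ψ false
  | .next φ, b => {t | t.drop 1 ∈ sem φ b}
  | .until_ φ ψ, true => {t | ∃ k, (∀ i < k, t.drop i ∈ sem φ true) ∧ t.drop k ∈ sem ψ true}
  | .until_ φ ψ, false => {t | ∀ k, (∃ i < k, t.drop i ∈ sem φ false) ∨ t.drop k ∈ sem ψ false}

/-- Answer-indexed family semantics of LTL₃ (definitive sets of finite-or-infinite traces). -/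
def sem3 : LTL A → Bool → Set (Trace (Set A))
  | .top, true => Set.univ
  | .top, false => ∅
  | .atom a, true => dp {t | t ≠ eps ∧ a ∈ t.st0}
  | .atom a, false => dp {t | t ≠ eps ∧ a ∉ t.st0}
  | .neg φ, b => sem3 φ (!b)
  | .and φ ψ, true => sem3 φ true ∩ sem3 ψ true
  | .and φ ψ, false => dUnion (sem3 φ false) (sem3 ψ false)
  | .next φ, b => prepend (sem3 φ b)
  | .until_ φ ψ, true =>
      dUnionI (fun k => (fun X => prepend X ∩ sem3 φ true)^[k] (sem3 ψ true))
  | .until_ φ ψ, false =>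
      ⋂ k, (fun X => dUnion (prepend X) (sem3 φ false))^[k] (sem3 ψ false)

end LTL

/-!
Since `▷X` is the preimage of `X` under `drop1`, it commutes with `∩` and `∪`; what
remains is that `▷` commutes with `↯`. Dropping the first state commutes with both `↓`
and `↑`: `↓▷Z = ▷↓Z`, and `drop1` maps `↑t` onto `↑(drop1 t)` (for `t = ε` because
`drop1` is surjective and fixes `ε`). Hence
`t ∈ ▷↯Z ↔ ↑(drop1 t) ⊆ ↓Z ↔ drop1 '' ↑t ⊆ ↓Z ↔ ↑t ⊆ ▷↓Z = ↓▷Z ↔ t ∈ ↯▷Z`.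
-/

namespace Trace

variable {σ : Type}

def cons (a : σ) (t : Trace σ) : Trace σ := app (Sum.inl [a]) t

@[simp]
lemma drop1_eps : drop1 (eps : Trace σ) = eps := rfl

@[simp]
lemma eps_append (t : Trace σ) : eps ++ t = t := by
  rcases t with l | f
  · rfl
  · show Sum.inr _ = Sum.inr f
    simp

lemma cons_append (a : σ) (u v : Trace σ) : cons a u ++ v = cons a (u ++ v) := by
  rcases u with l | f
  · rcases v with l' | g
    · rfl
    · show Sum.inr _ = Sum.inr _
      congr 1
      funext n
      cases n <;> simp
  · rfl

@[simp]
lemma drop1_cons (a : σ) (t : Trace σ) : drop1 (cons a t) = t := by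
  rcases t with l | f
  · rfl
  · show Sum.inr _ = Sum.inr f
    simp

lemma eq_eps_or_eq_cons (t : Trace σ) : t = eps ∨ ∃ a t', t = cons a t' := by
  rcases t with (_ | ⟨a, l⟩) | f
  · exact Or.inl rfl
  · exact Or.inr ⟨a, Sum.inl l, rfl⟩
  · refine Or.inr ⟨f 0, Sum.inr (fun n => f (n + 1)), ?_⟩
    show Sum.inr f = Sum.inr _
    congr 1
    funext n
    cases n <;> simp

lemma drop1_surjective : Function.Surjective (drop1 : Trace σ → Trace σ) := by
  intro t
  rcases eq_eps_or_eq_cons t with rfl | ⟨a, -, -⟩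
  · exact ⟨eps, rfl⟩
  · exact ⟨cons a t, drop1_cons a t⟩

lemma prepend_eq_preimage (X : Set (Trace σ)) : prepend X = drop1 ⁻¹' X := rfl

lemma ext_eps : ext (eps : Trace σ) = Set.univ :=
  Set.eq_univ_of_forall fun u => ⟨u, (eps_append u).symm⟩

lemma ext_cons (a : σ) (t : Trace σ) : ext (cons a t) = cons a '' ext t := by
  ext u
  simp only [ext, Set.mem_ofPred_eq, Set.mem_image, cons_append]
  constructor
  · rintro ⟨v, rfl⟩
    exact ⟨t ++ v, ⟨v, rfl⟩, rfl⟩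
  · rintro ⟨_, ⟨v, rfl⟩, rfl⟩
    exact ⟨v, rfl⟩

lemma image_drop1_ext (t : Trace σ) : drop1 '' ext t = ext (drop1 t) := by
  rcases eq_eps_or_eq_cons t with rfl | ⟨a, t, rfl⟩
  · rw [drop1_eps, ext_eps, Set.image_univ, drop1_surjective.range_eq]
  · rw [ext_cons, Set.image_image]
    simp

lemma preS_prepend (Z : Set (Trace σ)) : preS (prepend Z) = prepend (preS Z) := by
  ext u
  simp only [preS, pre, prepend_eq_preimage, Set.mem_preimage, Set.mem_iUnion,
    Set.mem_ofPred_eq, exists_prop]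
  rcases eq_eps_or_eq_cons u with rfl | ⟨a, u, rfl⟩
  · simp only [drop1_eps, eps_append, exists_eq', and_true]
    show (∃ s, drop1 s ∈ Z) ↔ ∃ s, s ∈ Z
    exact drop1_surjective.exists.symm
  · simp only [drop1_cons, cons_append]
    constructor
    · rintro ⟨_, hs, v, rfl⟩
      exact ⟨_, by simpa using hs, v, rfl⟩
    · rintro ⟨_, hs, v, rfl⟩
      exact ⟨_, by simpa using hs, v, rfl⟩

lemma prepend_dp (Z : Set (Trace σ)) : prepend (dp Z) = dp (prepend Z) := by
  ext t
  rw [prepend_eq_preimage, Set.mem_preimage, dp, dp, Set.mem_ofPred_eq, Set.mem_ofPred_eq,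
    preS_prepend, prepend_eq_preimage, ← Set.image_subset_iff, image_drop1_ext]

end Trace

theorem prepend_distrib_general {σ : Type} (X Y : Set (Trace σ)) :
    Trace.prepend (X ∩ Y) = Trace.prepend X ∩ Trace.prepend Y ∧
    Trace.prepend (Trace.dUnion X Y) =
      Trace.dUnion (Trace.prepend X) (Trace.prepend Y) :=
  ⟨Set.preimage_inter, by
    rw [Trace.dUnion, Trace.prepend_dp, Trace.prepend_eq_preimage, Set.preimage_union]
    rfl⟩

theorem prepend_distrib {σ : Type} (X Y : Set (Trace σ))
    (hX : Trace.Definitive X) (hY : Trace.Definitive Y) :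
    Trace.prepend (X ∩ Y) = Trace.prepend X ∩ Trace.prepend Y ∧
    Trace.prepend (Trace.dUnion X Y) =
      Trace.dUnion (Trace.prepend X) (Trace.prepend Y) :=
  prepend_distrib_general X Y
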